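/- arXiv:1802.07446 — 2 statements merged into one kernel-verified Lean document; each statement's English description precedes it below -/
import Mathlib

section
/- Let k be a positive integer and let a_n and b_1^n,…,b_k^n be sequences of nonnegative integers with Σ_{i=1}^k b_i^n ≤ a_n. If a_n/binom(n,2) → 1 and, for each 1 ≤ i ≤ k, b_i^n/n → b_i ≥ 0, then ( log binom(a_n; {b_i^n}_{1≤i≤k}) − (Σ_{i=1}^k b_i^n) log n ) / n converges to Σ_{i=1}^k s(2 b_i), where s(x) := x/2 − (x/2) log x for x > 0 and s(0) := 0. -/
open Filter Finset

open scoped Classical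

noncomputable section

/-- Shannon entropy (natural logarithm) of a weight function on a finite type;
since `Real.log 0 = 0`, the usual convention `0 · log 0 = 0` holds. -/
def shannonEntropy {α : Type*} [Fintype α] (P : α → ℝ) : ℝ :=
  - ∑ a, P a * Real.log (P a)

/-- `P` is a probability vector on the finite type `α`. -/
def IsProbVec {α : Type*} [Fintype α] (P : α → ℝ) : Prop :=
  (∀ a, 0 ≤ P a) ∧ ∑ a, P a = 1

/-- `s(x) = x/2 - (x/2)·log x`; since `Real.log 0 = 0`, `sFun 0 = 0`. -/
def sFun (x : ℝ) : ℝ := x / 2 - x / 2 * Real.log x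

/-- A marked graph on the vertex set `Fin n` with edge marks `Ξ` and vertex marks `Θ`:
a symmetric, irreflexive `Option Ξ`-valued edge-mark function (`none` = no edge)
together with a vertex-mark function. -/
abbrev MarkedGraph (n : ℕ) (Ξ Θ : Type) :=
  {fe : (Fin n → Fin n → Option Ξ) × (Fin n → Θ) //
    (∀ i j, fe.1 i j = fe.1 j i) ∧ ∀ i, fe.1 i i = none}

/-- The joint edge-mark set `Ξ₁₂ = ((Ξ₁∪{∘₁})×(Ξ₂∪{∘₂})) \ {(∘₁,∘₂)}`,
with `none` playing the role of `∘ᵢ`. -/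
abbrev JointEdgeMark (Ξ1 Ξ2 : Type) := {x : Option Ξ1 × Option Ξ2 // x ≠ (none, none)}

instance (Ξ1 Ξ2 : Type) [Fintype Ξ1] [Fintype Ξ2] : Fintype (JointEdgeMark Ξ1 Ξ2) :=
  Subtype.fintype _

instance (n : ℕ) (Ξ Θ : Type) [Fintype Ξ] [Fintype Θ] : Fintype (MarkedGraph n Ξ Θ) :=
  Subtype.fintype _

/-- A jointly marked graph. -/
abbrev JointMarkedGraph (n : ℕ) (Ξ1 Ξ2 Θ1 Θ2 : Type) :=
  MarkedGraph n (JointEdgeMark Ξ1 Ξ2) (Θ1 × Θ2)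

/-- The first marginal of a jointly marked graph. -/
def marg1 {n : ℕ} {Ξ1 Ξ2 Θ1 Θ2 : Type} (G : JointMarkedGraph n Ξ1 Ξ2 Θ1 Θ2) :
    MarkedGraph n Ξ1 Θ1 :=
  ⟨(fun i j => (G.1.1 i j).bind fun x => x.1.1, fun i => (G.1.2 i).1),
    fun i j => by dsimp only; rw [G.2.1 i j],
    fun i => by dsimp only; rw [G.2.2 i]; rfl⟩

/-- The second marginal of a jointly marked graph. -/
def marg2 {n : ℕ} {Ξ1 Ξ2 Θ1 Θ2 : Type} (G : JointMarkedGraph n Ξ1 Ξ2 Θ1 Θ2) :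
    MarkedGraph n Ξ2 Θ2 :=
  ⟨(fun i j => (G.1.1 i j).bind fun x => x.1.2, fun i => (G.1.2 i).2),
    fun i j => by dsimp only; rw [G.2.1 i j],
    fun i => by dsimp only; rw [G.2.2 i]; rfl⟩

/-- Combine two optional edge marks into an optional joint edge mark. -/
def jointOpt {Ξ1 Ξ2 : Type} (a : Option Ξ1) (b : Option Ξ2) : Option (JointEdgeMark Ξ1 Ξ2) :=
  if h : (a, b) = ((none : Option Ξ1), (none : Option Ξ2)) then none else some ⟨(a, b), h⟩

/-- The superposition `G₁ ⊕ G₂` of two marked graphs on the same vertex set. -/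
def oplus {n : ℕ} {Ξ1 Ξ2 Θ1 Θ2 : Type} (H1 : MarkedGraph n Ξ1 Θ1) (H2 : MarkedGraph n Ξ2 Θ2) :
    JointMarkedGraph n Ξ1 Ξ2 Θ1 Θ2 :=
  ⟨(fun i j => jointOpt (H1.1.1 i j) (H2.1.1 i j), fun i => (H1.1.2 i, H2.1.2 i)),
    fun i j => by dsimp only; rw [H1.2.1 i j, H2.2.1 i j],
    fun i => by dsimp only; rw [H1.2.2 i, H2.2.2 i]; simp [jointOpt]⟩

/-- `m_G(x)`: the number of edges of `G` carrying mark `x`. -/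
def mCount {n : ℕ} {Ξ Θ : Type} (G : MarkedGraph n Ξ Θ) (x : Ξ) : ℕ :=
  (univ.filter (fun pr : Fin n × Fin n => pr.1 < pr.2 ∧ G.1.1 pr.1 pr.2 = some x)).card

/-- `u_G(θ)`: the number of vertices of `G` carrying mark `θ`. -/
def uCount {n : ℕ} {Ξ Θ : Type} (G : MarkedGraph n Ξ Θ) (θ : Θ) : ℕ :=
  (univ.filter (fun i => G.1.2 i = θ)).card

/-- The degree of vertex `i` in `G`. -/
def degG {n : ℕ} {Ξ Θ : Type} (G : MarkedGraph n Ξ Θ) (i : Fin n) : ℕ :=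
  (univ.filter (fun j => G.1.1 i j ≠ none)).card

/-- The total number of edges of `G`. -/
def edgeCount {n : ℕ} {Ξ Θ : Type} (G : MarkedGraph n Ξ Θ) : ℕ :=
  (univ.filter (fun pr : Fin n × Fin n => pr.1 < pr.2 ∧ G.1.1 pr.1 pr.2 ≠ none)).card

/-- `c_k(d)`: the number of indices `i` with `d i = k`. -/
def ckCount (n : ℕ) (d : Fin n → ℕ) (k : ℕ) : ℕ := (univ.filter (fun i => d i = k)).card

/-- `c_{k,l}(d, d')`: the number of indices `i` with `d i = k` and `d' i = l`. -/
def cklCount (n : ℕ) (d d' : Fin n → ℕ) (k l : ℕ) : ℕ :=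
  (univ.filter (fun i => d i = k ∧ d' i = l)).card

/-- The law of `f(A)` when `A` has law `P`. -/
def pushLaw {α β : Type*} [Fintype α] (P : α → ℝ) (f : α → β) (b : β) : ℝ :=
  ∑ a ∈ univ.filter (fun a => f a = b), P a

/-- First-coordinate marginal of a weight function on joint edge marks;
`margE1 γ (some x₁)` sums over joint marks with first coordinate `x₁`, and
`margE1 γ none` over those with first coordinate `∘₁`. -/
def margE1 {Ξ1 Ξ2 : Type} [Fintype Ξ1] [Fintype Ξ2]
    (γ : JointEdgeMark Ξ1 Ξ2 → ℝ) (a : Option Ξ1) : ℝ :=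
  ∑ x ∈ univ.filter (fun x : JointEdgeMark Ξ1 Ξ2 => x.1.1 = a), γ x

/-- Second-coordinate marginal of a weight function on joint edge marks. -/
def margE2 {Ξ1 Ξ2 : Type} [Fintype Ξ1] [Fintype Ξ2]
    (γ : JointEdgeMark Ξ1 Ξ2 → ℝ) (b : Option Ξ2) : ℝ :=
  ∑ x ∈ univ.filter (fun x : JointEdgeMark Ξ1 Ξ2 => x.1.2 = b), γ x

/-- First marginal of a vertex-mark distribution. -/
def qMarg1 {Θ1 Θ2 : Type} [Fintype Θ2] (q : Θ1 × Θ2 → ℝ) (θ1 : Θ1) : ℝ := ∑ θ2, q (θ1, θ2)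

/-- Second marginal of a vertex-mark distribution. -/
def qMarg2 {Θ1 Θ2 : Type} [Fintype Θ1] (q : Θ1 × Θ2 → ℝ) (θ2 : Θ2) : ℝ := ∑ θ1, q (θ1, θ2)

/-- The probability that the marked Erdős–Rényi ensemble `G(n;p,q)` produces
exactly the jointly marked graph `H`. -/
def erProb {Ξ1 Ξ2 Θ1 Θ2 : Type} [Fintype Ξ1] [Fintype Ξ2] (n : ℕ)
    (pe : JointEdgeMark Ξ1 Ξ2 → ℝ) (q : Θ1 × Θ2 → ℝ)
    (H : JointMarkedGraph n Ξ1 Ξ2 Θ1 Θ2) : ℝ :=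
  (∏ pr ∈ univ.filter (fun pr : Fin n × Fin n => pr.1 < pr.2),
      (H.1.1 pr.1 pr.2).elim (1 - (∑ x, pe x) / n) (fun x => pe x / n))
    * ∏ i, q (H.1.2 i)

/-- The typical set `G^{(n)}_{p,q}` for the marked Erdős–Rényi ensemble. -/
def erTypical {Ξ1 Ξ2 Θ1 Θ2 : Type} [Fintype Ξ1] [Fintype Ξ2] [Fintype Θ1] [Fintype Θ2] (n : ℕ)
    (pe : JointEdgeMark Ξ1 Ξ2 → ℝ) (q : Θ1 × Θ2 → ℝ) :
    Finset (JointMarkedGraph n Ξ1 Ξ2 Θ1 Θ2) :=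
  univ.filter (fun H =>
    (∑ x, |(mCount H x : ℝ) - n * pe x / 2|) ≤ (n : ℝ) ^ ((2 : ℝ) / 3) ∧
    (∑ θ, |(uCount H θ : ℝ) - n * q θ|) ≤ (n : ℝ) ^ ((2 : ℝ) / 3))

/-- `d_{1,2}` for the Erdős–Rényi ensemble. -/
def erD12 {Ξ1 Ξ2 : Type} [Fintype Ξ1] [Fintype Ξ2] (pe : JointEdgeMark Ξ1 Ξ2 → ℝ) : ℝ :=
  ∑ x, pe x

/-- `d_1` for the Erdős–Rényi ensemble. -/
def erD1 {Ξ1 Ξ2 : Type} [Fintype Ξ1] [Fintype Ξ2] (pe : JointEdgeMark Ξ1 Ξ2 → ℝ) : ℝ :=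
  ∑ a : Ξ1, margE1 pe (some a)

/-- `d_2` for the Erdős–Rényi ensemble. -/
def erD2 {Ξ1 Ξ2 : Type} [Fintype Ξ1] [Fintype Ξ2] (pe : JointEdgeMark Ξ1 Ξ2 → ℝ) : ℝ :=
  ∑ b : Ξ2, margE2 pe (some b)

/-- `Σ₁₂ = H(Q) + Σ_x s(p_x)` for the Erdős–Rényi ensemble. -/
def erSigma12 {Ξ1 Ξ2 Θ1 Θ2 : Type} [Fintype Ξ1] [Fintype Ξ2] [Fintype Θ1] [Fintype Θ2]
    (pe : JointEdgeMark Ξ1 Ξ2 → ℝ) (q : Θ1 × Θ2 → ℝ) : ℝ :=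
  shannonEntropy q + ∑ x, sFun (pe x)

/-- `Σ₁ = H(Q₁) + Σ_{x₁∈Ξ₁} s(p_{x₁})` for the Erdős–Rényi ensemble. -/
def erSigma1 {Ξ1 Ξ2 Θ1 Θ2 : Type} [Fintype Ξ1] [Fintype Ξ2] [Fintype Θ1] [Fintype Θ2]
    (pe : JointEdgeMark Ξ1 Ξ2 → ℝ) (q : Θ1 × Θ2 → ℝ) : ℝ :=
  shannonEntropy (qMarg1 q) + ∑ a : Ξ1, sFun (margE1 pe (some a))

/-- `Σ₂ = H(Q₂) + Σ_{x₂∈Ξ₂} s(p_{x₂})` for the Erdős–Rényi ensemble. -/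
def erSigma2 {Ξ1 Ξ2 Θ1 Θ2 : Type} [Fintype Ξ1] [Fintype Ξ2] [Fintype Θ1] [Fintype Θ2]
    (pe : JointEdgeMark Ξ1 Ξ2 → ℝ) (q : Θ1 × Θ2 → ℝ) : ℝ :=
  shannonEntropy (qMarg2 q) + ∑ b : Ξ2, sFun (margE2 pe (some b))

/-- The probability of a decoding error for the code `(f1, f2, g)` when the source
has law `P`. -/
def errProb {n L1 L2 : ℕ} {Ξ1 Ξ2 Θ1 Θ2 : Type}
    [Fintype Ξ1] [Fintype Ξ2] [Fintype Θ1] [Fintype Θ2]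
    (P : JointMarkedGraph n Ξ1 Ξ2 Θ1 Θ2 → ℝ)
    (f1 : MarkedGraph n Ξ1 Θ1 → Fin L1) (f2 : MarkedGraph n Ξ2 Θ2 → Fin L2)
    (g : Fin L1 × Fin L2 → JointMarkedGraph n Ξ1 Ξ2 Θ1 Θ2) : ℝ :=
  ∑ H ∈ univ.filter (fun H => g (f1 (marg1 H), f2 (marg2 H)) ≠ H), P H

/-- A rate tuple `(α1, R1, α2, R2)` is achievable for the family of source laws `P`. -/
def achievable {Ξ1 Ξ2 Θ1 Θ2 : Type} [Fintype Ξ1] [Fintype Ξ2] [Fintype Θ1] [Fintype Θ2]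
    (P : ∀ n : ℕ, JointMarkedGraph n Ξ1 Ξ2 Θ1 Θ2 → ℝ) (α1 R1 α2 R2 : ℝ) : Prop :=
  ∃ (L1 L2 : ℕ → ℕ) (f1 : ∀ n, MarkedGraph n Ξ1 Θ1 → Fin (L1 n))
    (f2 : ∀ n, MarkedGraph n Ξ2 Θ2 → Fin (L2 n))
    (g : ∀ n, Fin (L1 n) × Fin (L2 n) → JointMarkedGraph n Ξ1 Ξ2 Θ1 Θ2),
    limsup (fun n : ℕ => (Real.log (L1 n) - (α1 * n * Real.log n + R1 * n)) / n) atTop ≤ 0 ∧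
    limsup (fun n : ℕ => (Real.log (L2 n) - (α2 * n * Real.log n + R2 * n)) / n) atTop ≤ 0 ∧
    Tendsto (fun n => errProb (P n) (f1 n) (f2 n) (g n)) atTop (nhds 0)

/-- Membership in the rate region for the family of source laws `P`. -/
def inRateRegion {Ξ1 Ξ2 Θ1 Θ2 : Type} [Fintype Ξ1] [Fintype Ξ2] [Fintype Θ1] [Fintype Θ2]
    (P : ∀ n : ℕ, JointMarkedGraph n Ξ1 Ξ2 Θ1 Θ2 → ℝ) (α1 R1 α2 R2 : ℝ) : Prop :=
  ∃ R1s R2s : ℕ → ℝ,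
    Tendsto R1s atTop (nhds R1) ∧ Tendsto R2s atTop (nhds R2) ∧
    ∀ m, achievable P α1 (R1s m) α2 (R2s m)

/-- `(α,R) ⪰ (α',R')` iff `α > α'`, or `α = α'` and `R ≥ R'`. -/
def succeq (a b : ℝ × ℝ) : Prop := b.1 < a.1 ∨ (a.1 = b.1 ∧ b.2 ≤ a.2)

/-- The set of simple unmarked graphs on `[n]` with maximum degree `≤ Δ` whose degree
counts agree with those of the degree sequence `dseq`. -/
def cmSet (n Δ : ℕ) (dseq : Fin n → ℕ) : Finset (MarkedGraph n Unit Unit) :=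
  univ.filter (fun G =>
    (∀ i, degG G i ≤ Δ) ∧ ∀ k ≤ Δ, ckCount n (degG G) k = ckCount n dseq k)

/-- Forget all marks of a marked graph. -/
def forget {n : ℕ} {Ξ Θ : Type} (G : MarkedGraph n Ξ Θ) : MarkedGraph n Unit Unit :=
  ⟨(fun i j => (G.1.1 i j).map (fun _ => ()), fun _ => ()),
    fun i j => by dsimp only; rw [G.2.1 i j],
    fun i => by dsimp only; rw [G.2.2 i]; rfl⟩

/-- The probability that the marked configuration-model ensemble `G(n; d⁽ⁿ⁾, γ, q)`
produces exactly the jointly marked graph `H`. -/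
def cmProb {Ξ1 Ξ2 Θ1 Θ2 : Type} [Fintype Ξ1] [Fintype Ξ2] (n Δ : ℕ) (dseq : Fin n → ℕ)
    (γ : JointEdgeMark Ξ1 Ξ2 → ℝ) (q : Θ1 × Θ2 → ℝ)
    (H : JointMarkedGraph n Ξ1 Ξ2 Θ1 Θ2) : ℝ :=
  (if forget H ∈ cmSet n Δ dseq then ((cmSet n Δ dseq).card : ℝ)⁻¹ else 0) *
    (∏ pr ∈ univ.filter (fun pr : Fin n × Fin n => pr.1 < pr.2),
      (H.1.1 pr.1 pr.2).elim 1 (fun x => γ x)) *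
    ∏ i, q (H.1.2 i)

/-- `β₁ = P(Γ₁ ≠ ∘₁)`. -/
def beta1 {Ξ1 Ξ2 : Type} [Fintype Ξ1] [Fintype Ξ2] (γ : JointEdgeMark Ξ1 Ξ2 → ℝ) : ℝ :=
  ∑ x ∈ univ.filter (fun x : JointEdgeMark Ξ1 Ξ2 => x.1.1 ≠ none), γ x

/-- `β₂ = P(Γ₂ ≠ ∘₂)`. -/
def beta2 {Ξ1 Ξ2 : Type} [Fintype Ξ1] [Fintype Ξ2] (γ : JointEdgeMark Ξ1 Ξ2 → ℝ) : ℝ :=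
  ∑ x ∈ univ.filter (fun x : JointEdgeMark Ξ1 Ξ2 => x.1.2 ≠ none), γ x

/-- The joint law `P(X = k, Xᵢ = l)` where `X ∼ r` and `Xᵢ` is a `β`-thinning of `X`. -/
def pXX (r : ℕ → ℝ) (β : ℝ) (k l : ℕ) : ℝ :=
  r k * (k.choose l : ℝ) * β ^ l * (1 - β) ^ (k - l)

/-- The law of the `β`-thinning `Xᵢ` of `X ∼ r` (supported on `{0,…,Δ}`). -/
def pXlaw (Δ : ℕ) (r : ℕ → ℝ) (β : ℝ) (l : ℕ) : ℝ := ∑ k ∈ Finset.range (Δ + 1), pXX r β k l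

/-- The mean of a law supported on `{0,…,Δ}`. -/
def meanR (Δ : ℕ) (r : ℕ → ℝ) : ℝ := ∑ k ∈ Finset.range (Δ + 1), k * r k

/-- The Shannon entropy of a law supported on `{0,…,Δ}`. -/
def entR (Δ : ℕ) (r : ℕ → ℝ) : ℝ := - ∑ k ∈ Finset.range (Δ + 1), r k * Real.log (r k)

/-- `E[log X!]` for `X` with law `r` supported on `{0,…,Δ}`. -/
def elogFact (Δ : ℕ) (r : ℕ → ℝ) : ℝ := ∑ k ∈ Finset.range (Δ + 1), r k * Real.log (Nat.factorial k)

/-- `Σ₁₂ = -s(d₁₂) + H(X) - E[log X!] + H(Q) + (d₁₂/2)·H(Γ)` for the configuration model. -/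
def cmSigma12 {Ξ1 Ξ2 Θ1 Θ2 : Type} [Fintype Ξ1] [Fintype Ξ2] [Fintype Θ1] [Fintype Θ2]
    (Δ : ℕ) (r : ℕ → ℝ) (γ : JointEdgeMark Ξ1 Ξ2 → ℝ) (q : Θ1 × Θ2 → ℝ) : ℝ :=
  -sFun (meanR Δ r) + entR Δ r - elogFact Δ r + shannonEntropy q
    + meanR Δ r / 2 * shannonEntropy γ

/-- `Σ₁ = -s(d₁) + H(X₁) - E[log X₁!] + H(Q₁) + (d₁/2)·H(Γ₁ | Γ₁ ≠ ∘₁)`. -/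
def cmSigma1 {Ξ1 Ξ2 Θ1 Θ2 : Type} [Fintype Ξ1] [Fintype Ξ2] [Fintype Θ1] [Fintype Θ2]
    (Δ : ℕ) (r : ℕ → ℝ) (γ : JointEdgeMark Ξ1 Ξ2 → ℝ) (q : Θ1 × Θ2 → ℝ) : ℝ :=
  -sFun (meanR Δ (pXlaw Δ r (beta1 γ))) + entR Δ (pXlaw Δ r (beta1 γ))
    - elogFact Δ (pXlaw Δ r (beta1 γ)) + shannonEntropy (qMarg1 q)
    + meanR Δ (pXlaw Δ r (beta1 γ)) / 2
        * shannonEntropy (fun a : Ξ1 => margE1 γ (some a) / beta1 γ)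

/-- `Σ₂ = -s(d₂) + H(X₂) - E[log X₂!] + H(Q₂) + (d₂/2)·H(Γ₂ | Γ₂ ≠ ∘₂)`. -/
def cmSigma2 {Ξ1 Ξ2 Θ1 Θ2 : Type} [Fintype Ξ1] [Fintype Ξ2] [Fintype Θ1] [Fintype Θ2]
    (Δ : ℕ) (r : ℕ → ℝ) (γ : JointEdgeMark Ξ1 Ξ2 → ℝ) (q : Θ1 × Θ2 → ℝ) : ℝ :=
  -sFun (meanR Δ (pXlaw Δ r (beta2 γ))) + entR Δ (pXlaw Δ r (beta2 γ))
    - elogFact Δ (pXlaw Δ r (beta2 γ)) + shannonEntropy (qMarg2 q)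
    + meanR Δ (pXlaw Δ r (beta2 γ)) / 2
        * shannonEntropy (fun b : Ξ2 => margE2 γ (some b) / beta2 γ)

/-- The typical set `W^{(n)}` for the configuration model. -/
def Wset {Ξ1 Ξ2 Θ1 Θ2 : Type} [Fintype Ξ1] [Fintype Ξ2] [Fintype Θ1] [Fintype Θ2]
    (n Δ : ℕ) (dseq : Fin n → ℕ) (r : ℕ → ℝ)
    (γ : JointEdgeMark Ξ1 Ξ2 → ℝ) (q : Θ1 × Θ2 → ℝ) :
    Finset (JointMarkedGraph n Ξ1 Ξ2 Θ1 Θ2) :=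
  univ.filter (fun H =>
    (∀ k ≤ Δ, ckCount n (degG H) k = ckCount n dseq k) ∧
    ((∑ x, (mCount H x : ℝ)) = (∑ i, (dseq i : ℝ)) / 2) ∧
    ((∑ x, |(mCount H x : ℝ) - (∑ i, (dseq i : ℝ)) / 2 * γ x|) ≤ (n : ℝ) ^ ((2 : ℝ) / 3)) ∧
    ((∑ θ, |(uCount H θ : ℝ) - n * q θ|) ≤ (n : ℝ) ^ ((2 : ℝ) / 3)) ∧
    (∀ k ≤ Δ, ∀ l ≤ k,
      |(cklCount n (degG H) (degG (marg1 H)) k l : ℝ) - n * pXX r (beta1 γ) k l|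
        ≤ (n : ℝ) ^ ((2 : ℝ) / 3)) ∧
    (∀ k ≤ Δ, ∀ l ≤ k,
      |(cklCount n (degG H) (degG (marg2 H)) k l : ℝ) - n * pXX r (beta2 γ) k l|
        ≤ (n : ℝ) ^ ((2 : ℝ) / 3)))

/-- The law of the graph obtained from a uniformly random graph in `cmSet n Δ dseq`
by keeping every edge independently with probability `β`. -/
def percLaw (n Δ : ℕ) (dseq : Fin n → ℕ) (β : ℝ) (G1 : MarkedGraph n Unit Unit) : ℝ :=
  ∑ G ∈ cmSet n Δ dseq,
    ((cmSet n Δ dseq).card : ℝ)⁻¹ *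
      (if ∀ i j, G1.1.1 i j ≠ none → G.1.1 i j ≠ none then
        β ^ edgeCount G1 * (1 - β) ^ (edgeCount G - edgeCount G1) else 0)


/-!
Write `B = ∑ i, bᵢ`. The multinomial coefficient is `a^{(B)} / ∏ i, bᵢ!`, with the falling
factorial `a^{(B)}` squeezed between `(a + 1 - B)^B` and `a^B`; since `a ~ n² / 2` and `B = O(n)`,
both bounds give `log a^{(B)} = 2 B log n - B log 2 + o(n)`. Stirling's bounds
`log m! = m log m - m + O(log m)` give `log bᵢ! = bᵢ log n + n (xᵢ log xᵢ - xᵢ) + o(n)` when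
`bᵢ / n → xᵢ`. Subtracting, the limit is `∑ i, (xᵢ - xᵢ log xᵢ - xᵢ log 2) = ∑ i, s(2 xᵢ)`.
-/

open Real Topology
open scoped Nat

theorem Nat.multinomial_option_elim_mul_prod_factorial {ι : Type*} [Fintype ι] (a : ℕ)
    (b : ι → ℕ) (h : ∑ i, b i ≤ a) :
    Nat.multinomial univ (fun j : Option ι => j.elim (a - ∑ i, b i) b) * ∏ i, (b i)! =
      a.descFactorial (∑ i, b i) := by
  have hspec := Nat.multinomial_spec univ (fun j : Option ι => j.elim (a - ∑ i, b i) b)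
  simp only [Fintype.prod_option, Fintype.sum_option, Option.elim_none, Option.elim_some,
    Nat.sub_add_cancel h] at hspec
  rw [← Nat.factorial_mul_descFactorial h] at hspec
  refine Nat.eq_of_mul_eq_mul_left (Nat.factorial_pos (a - ∑ i, b i)) ?_
  rw [← hspec]
  ring

theorem log_multinomial_option_elim {ι : Type*} [Fintype ι] (a : ℕ) (b : ι → ℕ)
    (h : ∑ i, b i ≤ a) :
    log (Nat.multinomial univ (fun j : Option ι => j.elim (a - ∑ i, b i) b)) =
      log (a.descFactorial (∑ i, b i)) - ∑ i, log (b i)! := by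
  rw [← Nat.multinomial_option_elim_mul_prod_factorial a b h, Nat.cast_mul, Nat.cast_prod,
    log_mul (Nat.cast_ne_zero.mpr (Nat.multinomial_pos _ _).ne') (by positivity),
    log_prod fun i _ => by positivity]
  ring

theorem sFun_two_mul (x : ℝ) : sFun (2 * x) = x - x * log x - x * log 2 := by
  rcases eq_or_ne x 0 with rfl | hx
  · simp [sFun]
  rw [sFun, log_mul two_ne_zero hx]
  ring

theorem mul_log_sub_le_log_factorial (m : ℕ) : m * log m - m ≤ log m ! := by
  rcases eq_or_ne m 0 with rfl | hm
  · simp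
  have hstirling := Stirling.le_log_factorial_stirling hm
  have hlog_m : 0 ≤ log m := log_natCast_nonneg m
  have hlog_two_pi : 0 ≤ log (2 * π) := log_nonneg (by linarith [pi_gt_three])
  linarith

theorem log_factorial_le (m : ℕ) : log m ! ≤ m * log m - m + log m / 2 + 1 := by
  rcases m with _ | m
  · simp
  -- `stirlingSeq` is antitone on positive integers, so it is bounded by `stirlingSeq 1 = e / √2`.
  have hle : Stirling.stirlingSeq (m + 1) ≤ Stirling.stirlingSeq 1 :=
    Stirling.stirlingSeq'_antitone (Nat.zero_le m)
  have hlog := log_le_log (Stirling.stirlingSeq'_pos m) hle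
  rw [Stirling.log_stirlingSeq_formula, Stirling.stirlingSeq_one,
    log_div (exp_pos 1).ne' (by positivity), log_exp, log_sqrt zero_le_two,
    log_mul two_ne_zero (by positivity), log_div (by positivity) (exp_pos 1).ne', log_exp] at hlog
  linarith

theorem tendsto_log_div_of_tendsto_div {b : ℕ → ℕ} {x : ℝ}
    (hb : Tendsto (fun n => (b n : ℝ) / n) atTop (𝓝 x)) :
    Tendsto (fun n => log (b n) / n) atTop (𝓝 0) := by
  have hlog : Tendsto (fun n : ℕ => log n / n) atTop (𝓝 0) := by
    have h := (tendsto_pow_log_div_mul_add_atTop 1 0 1 one_ne_zero).comp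
      tendsto_natCast_atTop_atTop
    simpa [Function.comp_def] using h
  have hup : Tendsto (fun n : ℕ => log n / n + (b n / n) * (n : ℝ)⁻¹) atTop (𝓝 0) := by
    simpa using hlog.add (hb.mul tendsto_inv_atTop_nhds_zero_nat)
  refine tendsto_of_tendsto_of_tendsto_of_le_of_le' tendsto_const_nhds hup
    (Eventually.of_forall fun n => div_nonneg (log_natCast_nonneg _) n.cast_nonneg) ?_
  filter_upwards [eventually_gt_atTop 0] with n hn
  have hn' : (0 : ℝ) < n := Nat.cast_pos.mpr hn
  have hkey : log (b n) ≤ log n + b n / n := by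
    rcases eq_or_ne (b n) 0 with h | h
    · simp [h, log_natCast_nonneg]
    have hlog_div := log_le_sub_one_of_pos (x := (b n : ℝ) / n) (by positivity)
    rw [log_div (by positivity) hn'.ne'] at hlog_div
    linarith
  calc log (b n) / n ≤ (log n + b n / n) / n := by gcongr
    _ = _ := by ring

theorem tendsto_log_factorial_sub_mul_log_div {b : ℕ → ℕ} {x : ℝ}
    (hb : Tendsto (fun n => (b n : ℝ) / n) atTop (𝓝 x)) :
    Tendsto (fun n => (log (b n)! - b n * log n) / n) atTop (𝓝 (x * log x - x)) := by
  have herr : Tendsto (fun n => (log (b n)! - (b n * log (b n) - b n)) / n) atTop (𝓝 0) := by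
    have hup : Tendsto (fun n : ℕ => log (b n) / n / 2 + (n : ℝ)⁻¹) atTop (𝓝 0) := by
      simpa using ((tendsto_log_div_of_tendsto_div hb).div_const 2).add
        tendsto_inv_atTop_nhds_zero_nat
    refine tendsto_of_tendsto_of_tendsto_of_le_of_le tendsto_const_nhds hup (fun n => ?_)
      (fun n => ?_)
    · exact div_nonneg (by linarith [mul_log_sub_le_log_factorial (b n)]) n.cast_nonneg
    · calc (log (b n)! - (b n * log (b n) - b n)) / n ≤ (log (b n) / 2 + 1) / n := by
            gcongr; linarith [log_factorial_le (b n)]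
        _ = _ := by ring
  have hmain : Tendsto (fun n => (b n / n : ℝ) * log (b n / n) - b n / n) atTop
      (𝓝 (x * log x - x)) :=
    ((continuous_mul_log.tendsto x).comp hb).sub hb
  refine (by simpa using hmain.add herr : Tendsto _ _ _).congr' ?_
  filter_upwards [eventually_gt_atTop 0] with n hn
  have hn' : (n : ℝ) ≠ 0 := by positivity
  rcases eq_or_ne (b n) 0 with h | h
  · simp [h]
  rw [log_div (by exact_mod_cast h) hn']
  field_simp
  ring

theorem tendsto_mul_log_sub_two_mul_log_div {B c : ℕ → ℝ} {β γ : ℝ}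
    (hB : Tendsto (fun n => B n / n) atTop (𝓝 β))
    (hc : Tendsto (fun n => c n / n ^ 2) atTop (𝓝 γ)) (hγ : 0 < γ) :
    Tendsto (fun n => (B n * log (c n) - 2 * B n * log n) / n) atTop (𝓝 (β * log γ)) := by
  refine (hB.mul (hc.log hγ.ne')).congr' ?_
  filter_upwards [hc.eventually (eventually_gt_nhds hγ), eventually_gt_atTop 0] with n hcn hn
  have hn' : (0 : ℝ) < n := Nat.cast_pos.mpr hn
  have hcpos : 0 < c n := (div_pos_iff_of_pos_right (by positivity)).mp hcn
  rw [log_div hcpos.ne' (by positivity), log_pow]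
  field_simp
  push_cast
  ring

theorem tendsto_log_descFactorial_sub_div {a B : ℕ → ℕ} {β γ : ℝ}
    (ha : Tendsto (fun n => (a n : ℝ) / n ^ 2) atTop (𝓝 γ))
    (hB : Tendsto (fun n => (B n : ℝ) / n) atTop (𝓝 β)) (hγ : 0 < γ) :
    Tendsto (fun n => (log ((a n).descFactorial (B n)) - 2 * B n * log n) / n) atTop
      (𝓝 (β * log γ)) := by
  have hB_sq : Tendsto (fun n => (B n : ℝ) / n ^ 2) atTop (𝓝 0) := by
    refine (by simpa using hB.mul tendsto_inv_atTop_nhds_zero_nat : Tendsto _ _ _).congr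
      fun n => ?_
    ring
  have ha_add_one_sub : Tendsto (fun n => ((a n : ℝ) + 1 - B n) / n ^ 2) atTop (𝓝 γ) := by
    have h := (ha.add (tendsto_inv_atTop_nhds_zero_nat.pow 2)).sub hB_sq
    exact (by simpa using h : Tendsto _ _ _).congr fun n => by ring
  have hB_le_a : ∀ᶠ n in atTop, B n ≤ a n := by
    have h := (ha.sub hB_sq).eventually (eventually_gt_nhds (by simpa using hγ))
    filter_upwards [h, eventually_gt_atTop 0] with n hdiff hn
    rw [← sub_div, div_pos_iff_of_pos_right (by positivity), sub_pos] at hdiff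
    exact_mod_cast hdiff.le
  refine tendsto_of_tendsto_of_tendsto_of_le_of_le'
    (tendsto_mul_log_sub_two_mul_log_div hB ha_add_one_sub hγ)
    (tendsto_mul_log_sub_two_mul_log_div hB ha hγ) ?_ ?_
  all_goals filter_upwards [hB_le_a] with n hn
  · have hpow : (((a n + 1 - B n : ℕ) : ℝ)) ^ B n ≤ (a n).descFactorial (B n) := by
      exact_mod_cast Nat.pow_sub_le_descFactorial (a n) (B n)
    push_cast [Nat.cast_sub (show B n ≤ a n + 1 by omega)] at hpow
    have hbase : (0 : ℝ) < a n + 1 - B n := by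
      have : (B n : ℝ) ≤ a n := by exact_mod_cast hn
      linarith
    have hlog := log_le_log (by positivity) hpow
    rw [log_pow] at hlog
    gcongr
  · have hpow : ((a n).descFactorial (B n) : ℝ) ≤ (a n : ℝ) ^ B n := by
      exact_mod_cast Nat.descFactorial_le_pow (a n) (B n)
    have hpos : (0 : ℝ) < (a n).descFactorial (B n) := by
      exact_mod_cast Nat.descFactorial_pos.mpr hn
    have hlog := log_le_log hpos hpow
    rw [log_pow] at hlog
    gcongr

theorem tendsto_choose_two_div_sq :
    Tendsto (fun n : ℕ => (n.choose 2 : ℝ) / n ^ 2) atTop (𝓝 (1 / 2)) := by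
  have h := (tendsto_const_nhds (x := (1 : ℝ))).sub (tendsto_inv_atTop_nhds_zero_nat (𝕜 := ℝ))
  refine (by simpa using h.div_const 2 : Tendsto _ _ _).congr' ?_
  filter_upwards [eventually_gt_atTop 0] with n hn
  rw [Nat.cast_choose_two]
  field_simp

theorem multinomial_s_limit_general (k : ℕ) (a : ℕ → ℕ) (b : Fin k → ℕ → ℕ)
    (hle : ∀ n, ∑ i, b i n ≤ a n)
    (ha : Tendsto (fun n => (a n : ℝ) / (n.choose 2 : ℝ)) atTop (nhds 1))
    (bb : Fin k → ℝ) (hb : ∀ i, Tendsto (fun n => (b i n : ℝ) / n) atTop (nhds (bb i))) :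
    Tendsto (fun n =>
        (Real.log (Nat.multinomial Finset.univ
            (fun j : Option (Fin k) => j.elim (a n - ∑ i, b i n) (fun i => b i n)))
          - (∑ i, (b i n : ℝ)) * Real.log n) / n)
      atTop (nhds (∑ i, sFun (2 * bb i))) := by
  have ha_sq : Tendsto (fun n => (a n : ℝ) / n ^ 2) atTop (𝓝 (1 / 2)) := by
    refine (by simpa using ha.mul tendsto_choose_two_div_sq : Tendsto _ _ _).congr' ?_
    filter_upwards [eventually_ge_atTop 2] with n hn
    have : (n.choose 2 : ℝ) ≠ 0 := Nat.cast_ne_zero.mpr (Nat.choose_pos hn).ne'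
    field_simp
  have hB : Tendsto (fun n => ((∑ i, b i n : ℕ) : ℝ) / n) atTop (𝓝 (∑ i, bb i)) := by
    simpa [Finset.sum_div] using tendsto_finsetSum univ fun i _ => hb i
  have hdesc := tendsto_log_descFactorial_sub_div ha_sq hB (by norm_num)
  have hfact := tendsto_finsetSum univ fun i _ => tendsto_log_factorial_sub_mul_log_div (hb i)
  convert hdesc.sub hfact using 2 with n
  · rw [log_multinomial_option_elim (a n) (fun i => b i n) (hle n)]
    push_cast
    rw [← Finset.sum_div, Finset.sum_sub_distrib, ← Finset.sum_mul]
    ring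
  · simp only [sFun_two_mul, log_inv, one_div, Finset.sum_sub_distrib, ← Finset.sum_mul]
    ring

/-- second part of the multinomial asymptotics lemma. -/
theorem multinomial_s_limit (k : ℕ) (hk : 0 < k) (a : ℕ → ℕ) (b : Fin k → ℕ → ℕ)
    (hle : ∀ n, ∑ i, b i n ≤ a n)
    (ha : Tendsto (fun n => (a n : ℝ) / (n.choose 2 : ℝ)) atTop (nhds 1))
    (bb : Fin k → ℝ) (hb : ∀ i, Tendsto (fun n => (b i n : ℝ) / n) atTop (nhds (bb i)))
    (hbb : ∀ i, 0 ≤ bb i) :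
    Tendsto (fun n =>
        (Real.log (Nat.multinomial Finset.univ
            (fun j : Option (Fin k) => j.elim (a n - ∑ i, b i n) (fun i => b i n)))
          - (∑ i, (b i n : ℝ)) * Real.log n) / n)
      atTop (nhds (∑ i, sFun (2 * bb i))) :=
  multinomial_s_limit_general k a b hle ha bb hb
end
end

section
/- Let X be an integer-valued random variable taking values in {0,…,Δ} and let 0 ≤ ε ≤ 1. Let {Y_i}_{i≥1} be i.i.d. Bernoulli(ε) random variables independent of X, and define X_1 := Σ_{i=1}^X Y_i and X_2 := X − X_1. Then H(X_1, X_2) = H(X) + E[X]·H(Y_1) − E[ log binom(X, X_1) ], where H(Y_1) = −ε log ε − (1−ε) log(1−ε) is the binary entropy of Y_1. -/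
open Filter Finset

open scoped Classical

noncomputable section

/-!
Since `(X₁, X₂)` and `(X, X₁)` determine each other, `H(X₁, X₂) = H(X) + H(X₁ | X)`; in terms of
weights this chain rule is `negMulLog (p * b) = b * negMulLog p + p * negMulLog b`. Given `X = k`,
`X₁` is binomial, and `P(X₁ = l | X = k)` is the Bernstein polynomial `b_{k,l}` evaluated at `ε`.
As `-log b_{k,l}(ε) = -log C(k,l) - l log ε - (k - l) log (1 - ε)`, the Bernstein identities
`∑ₗ b_{k,l}(ε) = 1` and `∑ₗ l b_{k,l}(ε) = k ε` give `H(X₁ | X = k) = k H(Y₁) - E[log C(k, X₁)]`.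
-/

open Real Polynomial

lemma shannonEntropy_eq_sum_negMulLog {α : Type*} [Fintype α] (P : α → ℝ) :
    shannonEntropy P = ∑ a, negMulLog (P a) := by
  simp [shannonEntropy, negMulLog, sum_neg_distrib]

lemma sum_fin_prod_fin_eq_sum_range_diag {M : Type*} [AddCommMonoid M] (Δ : ℕ) (F : ℕ → ℕ → M)
    (hF : ∀ l m, Δ < l + m → F l m = 0) :
    ∑ lm : Fin (Δ + 1) × Fin (Δ + 1), F lm.1 lm.2
      = ∑ k ∈ range (Δ + 1), ∑ l ∈ range (k + 1), F l (k - l) := by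
  rw [sum_range_diag_flip, Fintype.sum_prod_type,
    Fin.sum_univ_eq_sum_range (fun l => ∑ m : Fin (Δ + 1), F l m)]
  refine sum_congr rfl fun l hl => ?_
  rw [Fin.sum_univ_eq_sum_range (F l)]
  refine (sum_subset (range_subset_range.2 (Nat.sub_le _ _)) fun m _ hm => hF l m ?_).symm
  simp only [mem_range] at hl hm
  omega

namespace bernsteinPolynomial

lemma eval_eq (n ν : ℕ) (x : ℝ) :
    (bernsteinPolynomial ℝ n ν).eval x = n.choose ν * x ^ ν * (1 - x) ^ (n - ν) := by
  simp [bernsteinPolynomial]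

lemma sum_eval (n : ℕ) (x : ℝ) :
    ∑ ν ∈ range (n + 1), (bernsteinPolynomial ℝ n ν).eval x = 1 := by
  simpa [eval_finsetSum] using congrArg (eval x) (bernsteinPolynomial.sum ℝ n)

lemma sum_mul_eval (n : ℕ) (x : ℝ) :
    ∑ ν ∈ range (n + 1), ν * (bernsteinPolynomial ℝ n ν).eval x = n * x := by
  simpa [eval_finsetSum, nsmul_eq_mul] using congrArg (eval x) (bernsteinPolynomial.sum_smul ℝ n)

lemma negMulLog_eval {n ν : ℕ} (hν : ν ≤ n) (x : ℝ) :
    negMulLog ((bernsteinPolynomial ℝ n ν).eval x)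
      = ν * (bernsteinPolynomial ℝ n ν).eval x * (-log x)
        + (n - ν) * (bernsteinPolynomial ℝ n ν).eval x * (-log (1 - x))
        - (bernsteinPolynomial ℝ n ν).eval x * log (n.choose ν) := by
  rw [eval_eq, negMulLog_mul, negMulLog_mul]
  simp only [negMulLog, log_pow, Nat.cast_sub hν]
  ring

lemma sum_negMulLog_eval (n : ℕ) (x : ℝ) :
    ∑ ν ∈ range (n + 1), negMulLog ((bernsteinPolynomial ℝ n ν).eval x)
      = n * (negMulLog x + negMulLog (1 - x))
        - ∑ ν ∈ range (n + 1), (bernsteinPolynomial ℝ n ν).eval x * log (n.choose ν) := by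
  rw [sum_congr rfl fun ν hν => negMulLog_eval (mem_range_succ_iff.1 hν) x]
  simp only [sum_sub_distrib, sum_add_distrib, ← sum_mul, sub_mul, ← mul_sum, sum_eval,
    sum_mul_eval, negMulLog]
  ring

lemma sum_negMulLog_mul_eval (p : ℝ) (n : ℕ) (x : ℝ) :
    ∑ ν ∈ range (n + 1), negMulLog (p * (bernsteinPolynomial ℝ n ν).eval x)
      = negMulLog p + n * p * (negMulLog x + negMulLog (1 - x))
        - ∑ ν ∈ range (n + 1), p * (bernsteinPolynomial ℝ n ν).eval x * log (n.choose ν) := by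
  simp only [negMulLog_mul, sum_add_distrib, ← sum_mul, ← mul_sum, sum_eval, sum_negMulLog_eval,
    mul_assoc]
  ring

end bernsteinPolynomial

theorem thinning_entropy_general (Δ : ℕ) (pX : ℕ → ℝ)
    (hsupp : ∀ k, Δ < k → pX k = 0)
    (ε : ℝ) :
    shannonEntropy (fun lm : Fin (Δ + 1) × Fin (Δ + 1) =>
        pX ((lm.1 : ℕ) + (lm.2 : ℕ)) * (((lm.1 : ℕ) + (lm.2 : ℕ)).choose (lm.1 : ℕ) : ℝ)
          * ε ^ (lm.1 : ℕ) * (1 - ε) ^ (lm.2 : ℕ))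
      = (- ∑ k ∈ Finset.range (Δ + 1), pX k * Real.log (pX k))
        + (∑ k ∈ Finset.range (Δ + 1), (k : ℝ) * pX k)
            * (-(ε * Real.log ε) - (1 - ε) * Real.log (1 - ε))
        - ∑ k ∈ Finset.range (Δ + 1), ∑ l ∈ Finset.range (k + 1),
            pX k * (k.choose l : ℝ) * ε ^ l * (1 - ε) ^ (k - l)
              * Real.log (k.choose l : ℝ) := by
  have hjoint : ∀ k, ∀ l ∈ range (k + 1),
      pX (l + (k - l)) * ((l + (k - l)).choose l : ℝ) * ε ^ l * (1 - ε) ^ (k - l)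
        = pX k * (bernsteinPolynomial ℝ k l).eval ε := fun k l hl => by
    rw [Nat.add_sub_cancel' (mem_range_succ_iff.1 hl), bernsteinPolynomial.eval_eq]
    ring
  rw [shannonEntropy_eq_sum_negMulLog, sum_fin_prod_fin_eq_sum_range_diag Δ
    (fun l m => negMulLog (pX (l + m) * ((l + m).choose l : ℝ) * ε ^ l * (1 - ε) ^ m))
    (fun l m h => by simp [hsupp _ h])]
  simp only [sum_congr rfl fun k _ => sum_congr rfl fun l hl => congrArg negMulLog (hjoint k l hl),
    bernsteinPolynomial.sum_negMulLog_mul_eval]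
  rw [sum_sub_distrib, sum_add_distrib, ← sum_mul]
  simp only [negMulLog, neg_mul, sum_neg_distrib, bernsteinPolynomial.eval_eq, mul_assoc]
  ring

/-- the thinning entropy identity
`H(X₁, X₂) = H(X) + E[X]·H(Y₁) - E[log C(X, X₁)]`, where `X ∼ pX` takes values in
`{0,…,Δ}`, `X₁` is an i.i.d. `Bernoulli(ε)` thinning of `X` and `X₂ = X - X₁`;
the joint law of `(X₁,X₂)` is `P(X₁=l, X₂=m) = pX(l+m)·C(l+m,l)·ε^l·(1-ε)^m`. -/
theorem thinning_entropy (Δ : ℕ) (pX : ℕ → ℝ) (hpX0 : ∀ k, 0 ≤ pX k)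
    (hsupp : ∀ k, Δ < k → pX k = 0) (hsum : ∑ k ∈ Finset.range (Δ + 1), pX k = 1)
    (ε : ℝ) (hε0 : 0 ≤ ε) (hε1 : ε ≤ 1) :
    shannonEntropy (fun lm : Fin (Δ + 1) × Fin (Δ + 1) =>
        pX ((lm.1 : ℕ) + (lm.2 : ℕ)) * (((lm.1 : ℕ) + (lm.2 : ℕ)).choose (lm.1 : ℕ) : ℝ)
          * ε ^ (lm.1 : ℕ) * (1 - ε) ^ (lm.2 : ℕ))
      = (- ∑ k ∈ Finset.range (Δ + 1), pX k * Real.log (pX k))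
        + (∑ k ∈ Finset.range (Δ + 1), (k : ℝ) * pX k)
            * (-(ε * Real.log ε) - (1 - ε) * Real.log (1 - ε))
        - ∑ k ∈ Finset.range (Δ + 1), ∑ l ∈ Finset.range (k + 1),
            pX k * (k.choose l : ℝ) * ε ^ l * (1 - ε) ^ (k - l)
              * Real.log (k.choose l : ℝ) :=
  thinning_entropy_general Δ pX hsupp ε

end
end
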